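/- arXiv:2408.00436 — 4 statements merged into one kernel-verified Lean document; each statement's English description precedes it below -/
import Mathlib

section
/- Let S be an n-qudit stabilizer group (odd prime p, order p^{n-k}) and ρ a single-qudit density matrix with Wigner function W(ρ;u,v). Then the probability of successful projection of ρ^{⊗n} onto the trivial-syndrome codespace equals tr(Π⁰_S ρ^{⊗n}) = Σ_{(⃗u|⃗v)∈S^⊥} ∏_{i=1}^n W(ρ; u_i, v_i), i.e. the complete weight enumerator of S^⊥ evaluated at the Wigner function entries. -/
open scoped Classical BigOperators ComplexOrder
open Matrix

noncomputable def omegaP (p : ℕ) : ℂ := Complex.exp (2 * Real.pi * Complex.I / p)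

noncomputable def omegaPow (p : ℕ) [NeZero p] (a : ZMod p) : ℂ := omegaP p ^ a.val

noncomputable def Xop (p : ℕ) [NeZero p] : Matrix (ZMod p) (ZMod p) ℂ :=
  fun j k => if j = k + 1 then 1 else 0

noncomputable def Zop (p : ℕ) [NeZero p] : Matrix (ZMod p) (ZMod p) ℂ :=
  fun j k => if j = k then omegaPow p j else 0

/-- The Heisenberg-Weyl displacement operator `D(u,v) = ω^{-2⁻¹ u v} X^u Z^v`. -/
noncomputable def Dop (p : ℕ) [NeZero p] (u v : ZMod p) : Matrix (ZMod p) (ZMod p) ℂ :=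
  omegaPow p (-(2 : ZMod p)⁻¹ * u * v) • (Xop p ^ u.val * Zop p ^ v.val)

/-- The phase point operator `A(0,0) = p⁻¹ Σ_{u,v} D(u,v)`. -/
noncomputable def A0 (p : ℕ) [NeZero p] : Matrix (ZMod p) (ZMod p) ℂ :=
  (p : ℂ)⁻¹ • ∑ u : ZMod p, ∑ v : ZMod p, Dop p u v

/-- The phase point operator `A(u,v) = D(u,v) A(0,0) D(u,v)†`. -/
noncomputable def Aop (p : ℕ) [NeZero p] (u v : ZMod p) : Matrix (ZMod p) (ZMod p) ℂ :=
  Dop p u v * A0 p * (Dop p u v)ᴴ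

/-- The discrete Wigner function `W(ρ; u,v) = p⁻¹ tr(ρ A(u,v))`. -/
noncomputable def W1 (p : ℕ) [NeZero p] (ρ : Matrix (ZMod p) (ZMod p) ℂ) (u v : ZMod p) : ℂ :=
  (p : ℂ)⁻¹ * (ρ * Aop p u v).trace

/-- The space of symplectic vectors labelling `n`-qudit displacement operators. -/
abbrev Sympl (p n : ℕ) := (Fin n → ZMod p) × (Fin n → ZMod p)

/-- The symplectic inner product `[χ,χ'] = u·v' - u'·v`. -/
noncomputable def symp (p n : ℕ) [NeZero p] (χ χ' : Sympl p n) : ZMod p :=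
  ∑ i, (χ.1 i * χ'.2 i - χ'.1 i * χ.2 i)

/-- The `n`-qudit displacement operator `D(u⃗,v⃗) = ⊗ᵢ D(uᵢ,vᵢ)` (entrywise product form). -/
noncomputable def Dn (p n : ℕ) [NeZero p] (u v : Fin n → ZMod p) :
    Matrix (Fin n → ZMod p) (Fin n → ZMod p) ℂ :=
  fun j k => ∏ i, Dop p (u i) (v i) (j i) (k i)

/-- The `n`-qudit phase point operator `A(u⃗,v⃗) = ⊗ᵢ A(uᵢ,vᵢ)`. -/
noncomputable def An (p n : ℕ) [NeZero p] (u v : Fin n → ZMod p) :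
    Matrix (Fin n → ZMod p) (Fin n → ZMod p) ℂ :=
  fun j k => ∏ i, Aop p (u i) (v i) (j i) (k i)

/-- The `n`-fold tensor power `ρ^{⊗n}`. -/
noncomputable def tensorPow (p n : ℕ) [NeZero p] (ρ : Matrix (ZMod p) (ZMod p) ℂ) :
    Matrix (Fin n → ZMod p) (Fin n → ZMod p) ℂ :=
  fun j k => ∏ i, ρ (j i) (k i)

/-- The symplectic dual `S^⊥`: all symplectic vectors whose displacement operators commute
with every element of `S`. -/
noncomputable def Sperp (p n : ℕ) [NeZero p] (S : AddSubgroup (Sympl p n)) : Set (Sympl p n) :=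
  {χ | ∀ χ' ∈ S, symp p n χ χ' = 0}

/-- The projector `Π⁰_S = p^{-(n-k)} Σ_{M ∈ S} M` onto the trivial-syndrome codespace. -/
noncomputable def Pi0 (p n k : ℕ) [NeZero p] (S : AddSubgroup (Sympl p n)) :
    Matrix (Fin n → ZMod p) (Fin n → ZMod p) ℂ :=
  ((p : ℂ) ^ (n - k))⁻¹ • ∑ χ : S, Dn p n (χ : Sympl p n).1 (χ : Sympl p n).2

/-
Expanding `Π⁰_S = p^{-(n-k)} Σ_{χ' ∈ S} D(χ')`, the trace against `ρ^{⊗n}` factorises over the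
qudits. On one qudit the phase-point operators expand the displacement operators,
`Σ_{u,v} ω^{ub - av} A(u,v) = p D(a,b)`, so `tr(D(a,b) ρ) = Σ_{u,v} W(ρ;u,v) ω^{ub - av}`.
Multiplying out gives `Σ_χ ∏ᵢ W(ρ;χᵢ) ω^{[χ,χ']}`, and summing the character `χ' ↦ ω^{[χ,χ']}`
over `S` yields `|S| = p^{n-k}` for `χ ∈ S^⊥` and `0` otherwise.
-/

open ZMod (stdAddChar)

lemma AddChar.map_sum_eq_prod {A M ι : Type*} [AddCommMonoid A] [CommMonoid M] (ψ : AddChar A M)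
    (s : Finset ι) (f : ι → A) : ψ (∑ i ∈ s, f i) = ∏ i ∈ s, ψ (f i) :=
  map_prod ψ.toMonoidHom (fun i => Multiplicative.ofAdd (f i)) s

lemma ZMod.inv_two_mul_two {p : ℕ} (hodd : Odd p) : (2 : ZMod p)⁻¹ * 2 = 1 :=
  ZMod.inv_mul_of_unit 2 <| by
    exact_mod_cast (ZMod.isUnit_iff_coprime 2 p).mpr (Nat.coprime_two_left.mpr hodd)

lemma ZMod.sum_stdAddChar_mul {p : ℕ} [NeZero p] (c : ZMod p) :
    ∑ v : ZMod p, stdAddChar (v * c) = if c = 0 then (p : ℂ) else 0 := by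
  simp [AddChar.sum_mulShift c (ZMod.isPrimitive_stdAddChar p)]

lemma ZMod.sum_stdAddChar_comp_eq_ite {A : Type*} [AddGroup A] [Fintype A] {N : ℕ} [NeZero N]
    (f : A →+ ZMod N) :
    ∑ a, stdAddChar (f a) = if f = 0 then (Fintype.card A : ℂ) else 0 := by
  have hzero : stdAddChar.compAddMonoidHom (0 : A →+ ZMod N) = 0 := by ext; simp
  have h := AddChar.sum_eq_ite (stdAddChar.compAddMonoidHom f)
  simpa only [← hzero, AddChar.compAddMonoidHom_apply,
    (AddChar.compAddMonoidHom_injective_right _ ZMod.injective_stdAddChar).eq_iff] using h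

section PiKronecker

variable {ι α R : Type*} [Fintype ι] [DecidableEq ι] [Fintype α] [CommSemiring R]

def piKronecker (M : ι → Matrix α α R) : Matrix (ι → α) (ι → α) R :=
  fun j k => ∏ i, M i (j i) (k i)

lemma piKronecker_mul (M N : ι → Matrix α α R) :
    piKronecker M * piKronecker N = piKronecker fun i => M i * N i := by
  ext j k
  simp only [piKronecker, Matrix.mul_apply, ← Finset.prod_mul_distrib]
  exact (Fintype.prod_sum fun i x => M i (j i) x * N i x (k i)).symm

lemma trace_piKronecker (M : ι → Matrix α α R) :
    (piKronecker M).trace = ∏ i, (M i).trace :=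
  (Fintype.prod_sum fun i x => M i x x).symm

end PiKronecker

section OneQudit

variable {p : ℕ} [NeZero p]

lemma omegaPow_eq_stdAddChar (a : ZMod p) : omegaPow p a = stdAddChar a := by
  rw [omegaPow, omegaP, ZMod.stdAddChar_apply, ZMod.toCircle_apply, ← Complex.exp_nat_mul]
  congr 1
  ring

lemma Xop_pow_apply (m : ℕ) (j k : ZMod p) :
    (Xop p ^ m) j k = if j = k + m then 1 else 0 := by
  induction m generalizing j with
  | zero => simp [Matrix.one_apply]
  | succ m ih =>
    rw [pow_succ', Matrix.mul_apply, Finset.sum_eq_single (j - 1)]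
    · simp only [Xop, ih, sub_add_cancel, if_true, one_mul, Nat.cast_succ]
      congr 1
      exact propext ⟨fun h => by linear_combination h, fun h => by linear_combination h⟩
    · intro t _ ht
      rw [Xop, if_neg fun h => ht (by rw [h]; ring), zero_mul]
    · simp

lemma Zop_pow_apply (m : ℕ) (j k : ZMod p) :
    (Zop p ^ m) j k = if j = k then stdAddChar ((m : ZMod p) * j) else 0 := by
  induction m generalizing j with
  | zero => simp [Matrix.one_apply]
  | succ m ih =>
    rw [pow_succ', Matrix.mul_apply, Finset.sum_eq_single j]
    · simp only [Zop, ih, if_true, omegaPow_eq_stdAddChar]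
      split_ifs
      · rw [← AddChar.map_add_eq_mul]; push_cast; ring_nf
      · rw [mul_zero]
    · intro t _ ht
      rw [Zop, if_neg (Ne.symm ht), zero_mul]
    · simp

lemma Dop_apply (u v j k : ZMod p) :
    Dop p u v j k = if j = k + u then stdAddChar (v * k - 2⁻¹ * u * v) else 0 := by
  rw [Dop, Matrix.smul_apply, Matrix.mul_apply, Finset.sum_eq_single k]
  · simp only [Xop_pow_apply, Zop_pow_apply, ZMod.natCast_val, ZMod.cast_id', id, if_true,
      omegaPow_eq_stdAddChar]
    split_ifs
    · rw [one_mul, smul_eq_mul, ← AddChar.map_add_eq_mul]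
      ring_nf
    · rw [zero_mul, smul_zero]
  · intro t _ ht
    rw [Zop_pow_apply, if_neg ht, mul_zero]
  · simp

variable (hodd : Odd p)
include hodd

-- With the phase `ω^{-2⁻¹uv}` in `Dop`, `A(0,0)` is the permutation `|k⟩ ↦ |3k⟩` rather than
-- the parity operator `|k⟩ ↦ |-k⟩`.
lemma A0_apply (j k : ZMod p) : A0 p j k = if j = 3 * k then 1 else 0 := by
  have h2 := ZMod.inv_two_mul_two hodd
  have hp : (p : ℂ) ≠ 0 := NeZero.natCast_ne p ℂ
  have hrow : ∀ u : ZMod p, ∑ v : ZMod p, Dop p u v j k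
      = if u = j - k ∧ j = 3 * k then (p : ℂ) else 0 := by
    intro u
    simp only [Dop_apply]
    by_cases hu : j = k + u
    · have he : ∀ v : ZMod p, v * k - 2⁻¹ * u * v = v * (k - 2⁻¹ * u) := fun v => by ring
      simp only [if_pos hu, he, ZMod.sum_stdAddChar_mul]
      congr 1
      exact propext ⟨fun h => ⟨by linear_combination -hu, by linear_combination hu - 2 * h - u * h2⟩,
        fun h => by linear_combination 2⁻¹ * hu - 2⁻¹ * h.2 - k * h2⟩
    · simp only [if_neg hu, Finset.sum_const_zero]
      rw [if_neg fun h => hu (by linear_combination -h.1)]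
  rw [A0, Matrix.smul_apply, Matrix.sum_apply]
  simp only [Matrix.sum_apply, hrow, ite_and, Finset.sum_ite_eq', Finset.mem_univ, if_true]
  split_ifs
  · rw [smul_eq_mul, inv_mul_cancel₀ hp]
  · rw [smul_zero]

lemma Aop_apply (u v j k : ZMod p) :
    Aop p u v j k = if j = 3 * k - 2 * u then stdAddChar (2 * v * (k - u)) else 0 := by
  have hDA : ∀ t : ZMod p, (Dop p u v * A0 p) j t
      = if j = 3 * t + u then stdAddChar (v * (3 * t) - 2⁻¹ * u * v) else 0 := by
    intro t
    rw [Matrix.mul_apply, Finset.sum_eq_single (3 * t)]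
    · rw [Dop_apply, A0_apply hodd, if_pos rfl, mul_one]
    · intro m _ hm
      rw [A0_apply hodd, if_neg hm, mul_zero]
    · simp
  rw [Aop, Matrix.mul_apply, Finset.sum_eq_single (k - u)]
  · simp only [hDA, Matrix.conjTranspose_apply, Dop_apply, sub_add_cancel, if_true,
      ← AddChar.map_neg_eq_conj, RCLike.star_def]
    rw [ite_mul, zero_mul, ← AddChar.map_add_eq_mul]
    congr 1
    · exact propext ⟨fun h => by linear_combination h, fun h => by linear_combination h⟩
    · ring_nf
  · intro t _ ht
    simp only [Matrix.conjTranspose_apply, Dop_apply]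
    rw [if_neg fun h => ht (by linear_combination -h), star_zero, mul_zero]
  · simp

lemma sum_stdAddChar_smul_Aop (a b : ZMod p) :
    ∑ u : ZMod p, ∑ v : ZMod p, stdAddChar (u * b - a * v) • Aop p u v = (p : ℂ) • Dop p a b := by
  have h2 := ZMod.inv_two_mul_two hodd
  ext j k
  have hrow : ∀ u : ZMod p, ∑ v : ZMod p, stdAddChar (u * b - a * v) * Aop p u v j k
      = if u = k - 2⁻¹ * a then (p : ℂ) * Dop p a b j k else 0 := by
    intro u
    have hu : u = k - 2⁻¹ * a ↔ 2 * (k - u) - a = 0 :=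
      ⟨fun h => by linear_combination -2 * h + a * h2,
        fun h => by linear_combination -2⁻¹ * h - (u - k) * h2⟩
    rw [Dop_apply]
    by_cases hj : j = 3 * k - 2 * u
    · have hphase : ∀ v : ZMod p, stdAddChar (u * b - a * v) * stdAddChar (2 * v * (k - u))
          = stdAddChar (u * b) * stdAddChar (v * (2 * (k - u) - a)) := fun v => by
        rw [← AddChar.map_add_eq_mul, ← AddChar.map_add_eq_mul]
        ring_nf
      simp only [Aop_apply hodd, if_pos hj, hphase, ← Finset.mul_sum, ZMod.sum_stdAddChar_mul, ← hu]
      by_cases hu0 : u = k - 2⁻¹ * a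
      · rw [if_pos hu0, if_pos hu0, if_pos (by linear_combination hj - 2 * hu0 + a * h2), hu0]
        rw [mul_comm]
        congr 2
        ring
      · rw [if_neg hu0, if_neg hu0, mul_zero]
    · simp only [Aop_apply hodd, if_neg hj, mul_zero, Finset.sum_const_zero]
      split_ifs with hu0 hja
      · exact absurd (by linear_combination hja + 2 * hu0 - a * h2) hj
      · rw [mul_zero]
      · rfl
  simp only [Matrix.sum_apply, Matrix.smul_apply, smul_eq_mul, hrow, Finset.sum_ite_eq',
    Finset.mem_univ, if_true]

lemma trace_Dop_mul_eq_sum_W1 (ρ : Matrix (ZMod p) (ZMod p) ℂ) (a b : ZMod p) :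
    (Dop p a b * ρ).trace = ∑ u : ZMod p, ∑ v : ZMod p, W1 p ρ u v * stdAddChar (u * b - a * v) := by
  have hp : (p : ℂ) ≠ 0 := NeZero.natCast_ne p ℂ
  calc (Dop p a b * ρ).trace = (p : ℂ)⁻¹ * (ρ * ((p : ℂ) • Dop p a b)).trace := by
        rw [Matrix.mul_smul, Matrix.trace_smul, smul_eq_mul, inv_mul_cancel_left₀ hp,
          Matrix.trace_mul_comm]
    _ = _ := by
        simp only [← sum_stdAddChar_smul_Aop hodd, Matrix.trace_sum,
          Matrix.mul_smul, Matrix.trace_smul, smul_eq_mul, Finset.mul_sum, W1]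
        exact Finset.sum_congr rfl fun u _ => Finset.sum_congr rfl fun v _ => by ring

end OneQudit

section Symplectic

variable {p n : ℕ} [NeZero p]

noncomputable def sympRight (χ : Sympl p n) : Sympl p n →+ ZMod p :=
  AddMonoidHom.mk' (symp p n χ) fun a b => by
    simp only [symp, Prod.fst_add, Prod.snd_add, Pi.add_apply, ← Finset.sum_add_distrib]
    exact Finset.sum_congr rfl fun i _ => by ring

lemma sum_stdAddChar_symp_eq_ite (S : AddSubgroup (Sympl p n)) (χ : Sympl p n) :
    ∑ χ' : S, stdAddChar (symp p n χ χ') = if χ ∈ Sperp p n S then (Nat.card S : ℂ) else 0 := by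
  have hperp : (sympRight χ).comp S.subtype = 0 ↔ χ ∈ Sperp p n S := by
    simp [DFunLike.ext_iff, Sperp, sympRight]
  have h := ZMod.sum_stdAddChar_comp_eq_ite ((sympRight χ).comp S.subtype)
  simp only [hperp] at h
  rw [Nat.card_eq_fintype_card]
  exact h

lemma trace_Dn_mul_tensorPow (hodd : Odd p) (ρ : Matrix (ZMod p) (ZMod p) ℂ)
    (a b : Fin n → ZMod p) :
    (Dn p n a b * tensorPow p n ρ).trace
      = ∑ χ : Sympl p n, (∏ i, W1 p ρ (χ.1 i) (χ.2 i)) * stdAddChar (symp p n χ (a, b)) := by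
  rw [show Dn p n a b = piKronecker fun i => Dop p (a i) (b i) from rfl,
    show tensorPow p n ρ = piKronecker fun _ => ρ from rfl, piKronecker_mul, trace_piKronecker]
  simp only [trace_Dop_mul_eq_sum_W1 hodd, Fintype.prod_sum, Fintype.sum_prod_type,
    Finset.prod_mul_distrib, symp, AddChar.map_sum_eq_prod]

end Symplectic

theorem acceptance_probability_eq_weight_enumerator_general (p n k : ℕ) [NeZero p]
    (hodd : Odd p)
    (S : AddSubgroup (Sympl p n))
    (hcard : Nat.card S = p ^ (n - k))
    (ρ : Matrix (ZMod p) (ZMod p) ℂ) :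
    (Pi0 p n k S * tensorPow p n ρ).trace =
      ∑ χ : ↥(Sperp p n S), ∏ i, W1 p ρ ((χ : Sympl p n).1 i) ((χ : Sympl p n).2 i) := by
  have hp : ((p : ℂ) ^ (n - k)) ≠ 0 := pow_ne_zero _ (NeZero.natCast_ne p ℂ)
  calc (Pi0 p n k S * tensorPow p n ρ).trace
      = ((p : ℂ) ^ (n - k))⁻¹ * ∑ χ : Sympl p n,
          (∏ i, W1 p ρ (χ.1 i) (χ.2 i)) * ∑ χ' : S, stdAddChar (symp p n χ χ') := by
        rw [Pi0, Matrix.smul_mul, Matrix.trace_smul, Matrix.sum_mul, Matrix.trace_sum, smul_eq_mul]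
        simp only [trace_Dn_mul_tensorPow hodd, Prod.mk.eta, Finset.mul_sum]
        rw [Finset.sum_comm]
    _ = ∑ χ : Sympl p n, if χ ∈ Sperp p n S then ∏ i, W1 p ρ (χ.1 i) (χ.2 i) else 0 := by
        rw [Finset.mul_sum]
        refine Finset.sum_congr rfl fun χ _ => ?_
        rw [sum_stdAddChar_symp_eq_ite, hcard, Nat.cast_pow]
        split_ifs
        · field_simp
        · rw [mul_zero, mul_zero]
    _ = _ := by
        rw [← Finset.sum_filter]
        exact Finset.sum_subtype _ (by simp) _

/-- the acceptance probability `tr(Π⁰_S ρ^{⊗n})` equals the complete weight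
enumerator of `S^⊥` evaluated at the Wigner-function entries of `ρ`. -/
theorem acceptance_probability_eq_weight_enumerator (p n k : ℕ) [NeZero p]
    (hp : p.Prime) (hodd : Odd p) (hk : k ≤ n)
    (S : AddSubgroup (Sympl p n))
    (hcomm : ∀ χ ∈ S, ∀ χ' ∈ S, symp p n χ χ' = 0)
    (hcard : Nat.card S = p ^ (n - k))
    (ρ : Matrix (ZMod p) (ZMod p) ℂ) (hρ : ρ.PosSemidef) (hρtr : ρ.trace = 1) :
    (Pi0 p n k S * tensorPow p n ρ).trace =
      ∑ χ : ↥(Sperp p n S), ∏ i, W1 p ρ ((χ : Sympl p n).1 i) ((χ : Sympl p n).2 i) :=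
  acceptance_probability_eq_weight_enumerator_general p n k hodd S hcard ρ
end

section
/- Suppose n is odd and A(z), B(z) are related by the qutrit MacWilliams identity B(z) = (1+8z)^n/3^{n-1}·A((1-z)/(1+8z)), with B(-1/2) ≠ 0. If 3A'(-1/2) + B'(-1/2) = 0, then also 3A(-1/2) + B(-1/2) = 0 and 3A''(-1/2) + B''(-1/2) = 0. (Hence any odd-length code whose weight enumerator satisfies the single linear-suppression condition automatically achieves cubic noise suppression.) -/
open Polynomial

/-- for odd `n`, if the weight enumerators satisfy the MacWilliams identity,
`B(-1/2) ≠ 0`, and the linear-suppression condition `3A'(-1/2) + B'(-1/2) = 0`, then also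
`3A(-1/2) + B(-1/2) = 0` and `3A''(-1/2) + B''(-1/2) = 0` (cubic noise suppression). -/
theorem odd_length_cubic_suppression (n : ℕ) (hn : Odd n) (A B : Polynomial ℝ)
    (hMW : ∀ z : ℝ, 1 + 8 * z ≠ 0 →
      B.eval z = (1 + 8 * z) ^ n / 3 ^ (n - 1) * A.eval ((1 - z) / (1 + 8 * z)))
    (hB : B.eval (-1/2) ≠ 0)
    (h1 : 3 * (derivative A).eval (-1/2) + (derivative B).eval (-1/2) = 0) :
    3 * A.eval (-1/2) + B.eval (-1/2) = 0 ∧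
    3 * (derivative (derivative A)).eval (-1/2)
      + (derivative (derivative B)).eval (-1/2) = 0 := by
  have hn1 : 1 ≤ n := hn.pos
  have hc : (3:ℝ)^(n-1) ≠ 0 := by positivity
  have hpow : ((-3:ℝ))^n = -(3:ℝ)^n := hn.neg_pow 3
  have hpow1 : ((-3:ℝ))^(n-1) = (3:ℝ)^(n-1) := (Nat.Odd.sub_odd hn odd_one).neg_pow 3
  have h3n : (3:ℝ)^n = 3^(n-1)*3 := by rw [← pow_succ, Nat.sub_add_cancel hn1]
  -- Part 1
  have key := hMW (-1/2) (by norm_num)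
  norm_num at key
  rw [hpow, h3n] at key
  have part1 : 3 * A.eval (-1/2) + B.eval (-1/2) = 0 := by
    rw [show (-1/2 : ℝ) = -(1/2) by norm_num, key]
    field_simp
    ring
  refine ⟨part1, ?_⟩
  -- derivative machinery
  have hz : (1:ℝ) + 8*(-1/2) ≠ 0 := by norm_num
  have hcont : Continuous (fun z : ℝ => 1 + 8*z) := by continuity
  have hne : ∀ z : ℝ, 1 + 8*z ≠ 0 → ∀ᶠ y in nhds z, 1 + 8*(y:ℝ) ≠ 0 :=
    fun z hz => hcont.continuousAt.eventually_ne hz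
  have hu : ∀ z : ℝ, HasDerivAt (fun z : ℝ => 1 + 8*z) 8 z := by
    intro z
    simpa using ((hasDerivAt_id z).const_mul (8:ℝ)).const_add (1:ℝ)
  have hv : ∀ z : ℝ, HasDerivAt (fun z : ℝ => 1 - z) (-1) z := by
    intro z
    simpa using (hasDerivAt_id z).const_sub (1:ℝ)
  have hw : ∀ z : ℝ, 1 + 8*z ≠ 0 → HasDerivAt (fun z : ℝ => (1-z)/(1+8*z))
      (((-1) * (1+8*z) - (1-z)*8)/(1+8*z)^2) z := fun z hz => (hv z).div (hu z) hz
  have hA : ∀ z : ℝ, 1 + 8*z ≠ 0 → HasDerivAt (fun z : ℝ => A.eval ((1-z)/(1+8*z)))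
      ((derivative A).eval ((1-z)/(1+8*z)) * (((-1) * (1+8*z) - (1-z)*8)/(1+8*z)^2)) z :=
    fun z hz => (A.hasDerivAt _).comp z (hw z hz)
  have hA' : ∀ z : ℝ, 1 + 8*z ≠ 0 → HasDerivAt (fun z : ℝ => (derivative A).eval ((1-z)/(1+8*z)))
      ((derivative (derivative A)).eval ((1-z)/(1+8*z)) * (((-1) * (1+8*z) - (1-z)*8)/(1+8*z)^2)) z :=
    fun z hz => ((derivative A).hasDerivAt _).comp z (hw z hz)
  have hpown : ∀ z : ℝ, HasDerivAt (fun z : ℝ => (1+8*z)^n) (((n:ℝ)*(1+8*z)^(n-1))*8) z :=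
    fun z => (hasDerivAt_pow n _).comp z (hu z)
  have hg : ∀ z : ℝ, 1 + 8*z ≠ 0 → HasDerivAt
      (fun z : ℝ => (1+8*z)^n / 3^(n-1) * A.eval ((1-z)/(1+8*z)))
      (((n:ℝ)*(1+8*z)^(n-1))*8/3^(n-1) * A.eval ((1-z)/(1+8*z))
        + (1+8*z)^n / 3^(n-1) *
          ((derivative A).eval ((1-z)/(1+8*z)) * (((-1) * (1+8*z) - (1-z)*8)/(1+8*z)^2))) z :=
    fun z hz => (((hpown z).div_const _).mul (hA z hz))
  -- B' = G1 on the open set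
  have hB1 : ∀ z : ℝ, 1 + 8*z ≠ 0 → (derivative B).eval z =
      ((n:ℝ)*(1+8*z)^(n-1))*8/3^(n-1) * A.eval ((1-z)/(1+8*z))
        + (1+8*z)^n / 3^(n-1) *
          ((derivative A).eval ((1-z)/(1+8*z)) * (((-1) * (1+8*z) - (1-z)*8)/(1+8*z)^2)) := by
    intro z hz0
    have heq : (fun z : ℝ => B.eval z) =ᶠ[nhds z]
        (fun z : ℝ => (1+8*z)^n / 3^(n-1) * A.eval ((1-z)/(1+8*z))) :=
      (hne z hz0).mono fun y hy => hMW y hy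
    calc (derivative B).eval z = deriv (fun x : ℝ => B.eval x) z := (B.deriv).symm
      _ = deriv (fun z : ℝ => (1+8*z)^n / 3^(n-1) * A.eval ((1-z)/(1+8*z))) z := heq.deriv_eq
      _ = _ := (hg z hz0).deriv
  -- second derivative of G1 at -1/2
  have hq : ∀ z : ℝ, HasDerivAt (fun z : ℝ => (-1) * (1+8*z) - (1-z)*8) ((-1)*8 - (-1)*8) z :=
    fun z => ((hu z).const_mul (-1)).sub ((hv z).mul_const 8)
  have hden : ∀ z : ℝ, HasDerivAt (fun z : ℝ => (1+8*z)^2) (((2:ℕ):ℝ)*(1+8*z)^(2-1)*8) z :=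
    fun z => (hasDerivAt_pow 2 _).comp z (hu z)
  have hW1 : HasDerivAt (fun z : ℝ => ((-1) * (1+8*z) - (1-z)*8)/(1+8*z)^2) _ (-1/2) :=
    (hq _).div (hden _) (by norm_num)
  have hP1 : HasDerivAt (fun z : ℝ => (1+8*z)^(n-1)) _ (-1/2) :=
    (hasDerivAt_pow (n-1) _).comp (-1/2) (hu _)
  have hterm : HasDerivAt (fun z : ℝ =>
      ((n:ℝ)*(1+8*z)^(n-1))*8/3^(n-1) * A.eval ((1-z)/(1+8*z))
        + (1+8*z)^n / 3^(n-1) *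
          ((derivative A).eval ((1-z)/(1+8*z)) * (((-1) * (1+8*z) - (1-z)*8)/(1+8*z)^2))) _ (-1/2) :=
    ((((hP1.const_mul (n:ℝ)).mul_const 8).div_const _).mul (hA _ hz)).add
      (((hpown _).div_const _).mul ((hA' _ hz).mul hW1))
  -- transfer to B''
  have heq2 : (fun z : ℝ => (derivative B).eval z) =ᶠ[nhds (-1/2 : ℝ)]
      (fun z : ℝ => ((n:ℝ)*(1+8*z)^(n-1))*8/3^(n-1) * A.eval ((1-z)/(1+8*z))
        + (1+8*z)^n / 3^(n-1) *
          ((derivative A).eval ((1-z)/(1+8*z)) * (((-1) * (1+8*z) - (1-z)*8)/(1+8*z)^2))) :=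
    (hne _ hz).mono fun y hy => hB1 y hy
  have hb2 : (derivative (derivative B)).eval (-1/2) = _ :=
    ((derivative B).deriv (x := (-1/2:ℝ))).symm.trans (heq2.deriv_eq.trans hterm.deriv)
  have hb1 := hB1 (-1/2) hz
  -- now numeric cleanup
  norm_num at hb1 hb2
  have e0 : (-3:ℝ)^n/3^(n-1) = -3 := by rw [hpow, h3n]; field_simp
  have e1 : (n:ℝ) * (-3:ℝ)^(n-1) * 8 / 3^(n-1) = 8*(n:ℝ) := by
    rw [hpow1]; field_simp
  have e2 : (n:ℝ) * (((n-1:ℕ):ℝ) * (-3:ℝ)^(n-1-1) * 8) * 8 / 3^(n-1)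
      = -(64*(n:ℝ)*((n:ℝ)-1)/3) := by
    obtain ⟨m, rfl⟩ := hn
    rcases m with _ | k
    · norm_num
    · have h1' : 2*(k+1)+1-1-1 = 2*k+1 := by omega
      have h2' : 2*(k+1)+1-1 = 2*(k+1) := by omega
      have h3' : ((-3:ℝ))^(2*k+1) = -(3:ℝ)^(2*k+1) := Odd.neg_pow ⟨k, by ring⟩ 3
      rw [h1', h2', h3']
      have h4' : (3:ℝ)^(2*(k+1)) = 3^(2*k+1)*3 := by rw [← pow_succ]; ring_nf
      rw [h4']
      have : (3:ℝ)^(2*k+1) ≠ 0 := by positivity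
      push_cast [h2']
      field_simp
      ring
  rw [show (-1/2 : ℝ) = -(1/2) by norm_num]
  rw [show (-1/2 : ℝ) = -(1/2) by norm_num] at h1
  rw [e0, e1] at hb1
  rw [e0, e1, e2] at hb2
  linear_combination hb2 + (8*(1-(n:ℝ))/3) * h1 - (8*(1-(n:ℝ))/3) * hb1
end

section
/- For the 11-qutrit Golay code distillation map ε' = 3(3A(z(ε))+B(z(ε)))/(4B(z(ε))) with z(ε)=(3-ε)/(8ε-6) and A, B the explicit Golay weight enumerators, the leading term of the Taylor expansion at ε=0 is ε' = (55/18)ε³ + O(ε⁴). -/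
open Asymptotics

/-- The simple weight enumerator `A(z)` of the 11-qutrit Golay code. -/
noncomputable def golayA : ℝ → ℝ := fun z =>
  1 + 528*z^6 + 7920*z^8 + 11000*z^9 + 23760*z^10 + 15840*z^11

/-- The simple weight enumerator `B(z)` of the dual of the 11-qutrit Golay code. -/
noncomputable def golayB : ℝ → ℝ := fun z =>
  1 + 528*z^5 + 528*z^6 + 15840*z^7 + 40920*z^8 + 129800*z^9 + 198000*z^10 + 145824*z^11

/-- The change of variables `z(ε) = (3-ε)/(8ε-6)`. -/
noncomputable def zEps (ε : ℝ) : ℝ := (3 - ε) / (8 * ε - 6)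

/-- The Golay distillation map `ε' = 3(3A(z(ε))+B(z(ε)))/(4B(z(ε)))`. -/
noncomputable def golayMap (ε : ℝ) : ℝ :=
  3 * (3 * golayA (zEps ε) + golayB (zEps ε)) / (4 * golayB (zEps ε))

/-!
Writing `z(ε) = y/x` with `x = 8ε - 6`, `y = 3 - ε` and passing to the homogeneous weight
enumerators `W(x, y) = x¹¹ A(y/x)`, the map becomes the rational function
`3(3 W_A + W_B) / (4 W_B)` of `ε`. Its numerator, minus `(55/18) ε³` times the denominator,
is a polynomial divisible by `ε⁴`, and `W_B(-6, 3) ≠ 0`, so the quotient by `ε⁴` stays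
bounded near `0`.
-/

noncomputable def golayHomA (x y : ℝ) : ℝ :=
  x^11 + 528*x^5*y^6 + 7920*x^3*y^8 + 11000*x^2*y^9 + 23760*x*y^10 + 15840*y^11

noncomputable def golayHomB (x y : ℝ) : ℝ :=
  x^11 + 528*x^6*y^5 + 528*x^5*y^6 + 15840*x^4*y^7 + 40920*x^3*y^8 + 129800*x^2*y^9
    + 198000*x*y^10 + 145824*y^11

lemma golayA_div {x : ℝ} (hx : x ≠ 0) (y : ℝ) : golayA (y / x) = golayHomA x y / x ^ 11 := by
  rw [golayA, golayHomA, eq_div_iff (pow_ne_zero 11 hx)]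
  field_simp

lemma golayB_div {x : ℝ} (hx : x ≠ 0) (y : ℝ) : golayB (y / x) = golayHomB x y / x ^ 11 := by
  rw [golayB, golayHomB, eq_div_iff (pow_ne_zero 11 hx)]
  field_simp

lemma golayMap_eq_hom {ε : ℝ} (hε : 8 * ε - 6 ≠ 0) :
    golayMap ε = 3 * (3 * golayHomA (8 * ε - 6) (3 - ε) + golayHomB (8 * ε - 6) (3 - ε)) /
      (4 * golayHomB (8 * ε - 6) (3 - ε)) := by
  rw [golayMap, zEps, golayA_div hε, golayB_div hε, ← mul_div_assoc, ← add_div, ← mul_div_assoc,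
    ← mul_div_assoc, div_div_div_cancel_right₀ (pow_ne_zero 11 hε)]

noncomputable def golayRemainder (ε : ℝ) : ℝ :=
  240570 - 1304424*ε + 3083751*ε^2 - 4062960*ε^3 + 2918520*ε^4 - 469920*ε^5 - 1257894*ε^6
    + 1415664*ε^7 - 756250*ε^8 + 217800*ε^9 - 27225*ε^10

lemma golay_numerator_eq (ε : ℝ) :
    54 * (3 * golayHomA (8 * ε - 6) (3 - ε) + golayHomB (8 * ε - 6) (3 - ε))
      - 220 * ε ^ 3 * golayHomB (8 * ε - 6) (3 - ε) = 2 ^ 7 * 3 ^ 12 * ε ^ 4 * golayRemainder ε := by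
  simp only [golayHomA, golayHomB, golayRemainder]
  ring

lemma golayMap_sub_eq {ε : ℝ} (hε : 8 * ε - 6 ≠ 0) (hB : golayHomB (8 * ε - 6) (3 - ε) ≠ 0) :
    golayMap ε - 55 / 18 * ε ^ 3 =
      ε ^ 4 * (2 ^ 4 * 3 ^ 10 * golayRemainder ε / golayHomB (8 * ε - 6) (3 - ε)) := by
  have key := golay_numerator_eq ε
  rw [golayMap_eq_hom hε]
  field_simp
  linear_combination key

/-- the Golay distillation map satisfies `ε' = (55/18)ε³ + O(ε⁴)` near `ε=0`. -/
theorem golay_cubic_suppression :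
    (fun ε : ℝ => golayMap ε - (55/18) * ε ^ 3) =O[nhds (0 : ℝ)] (fun ε : ℝ => ε ^ 4) := by
  have hcont : Continuous fun ε : ℝ => golayHomB (8 * ε - 6) (3 - ε) := by
    unfold golayHomB; fun_prop
  have hB0 : golayHomB (8 * 0 - 6) (3 - 0) ≠ 0 := by norm_num [golayHomB]
  have hε : ∀ᶠ ε in nhds (0 : ℝ), 8 * ε - 6 ≠ 0 :=
    ((by fun_prop : Continuous fun ε : ℝ => 8 * ε - 6).tendsto 0).eventually_ne (by norm_num)
  have hB : ∀ᶠ ε in nhds (0 : ℝ), golayHomB (8 * ε - 6) (3 - ε) ≠ 0 :=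
    (hcont.tendsto 0).eventually_ne hB0
  have hfactor : (fun ε : ℝ => golayMap ε - (55/18) * ε ^ 3) =ᶠ[nhds (0 : ℝ)]
      fun ε => ε ^ 4 * (2 ^ 4 * 3 ^ 10 * golayRemainder ε / golayHomB (8 * ε - 6) (3 - ε)) := by
    filter_upwards [hε, hB] with ε hε hB using golayMap_sub_eq hε hB
  have hbounded : (fun ε : ℝ => 2 ^ 4 * 3 ^ 10 * golayRemainder ε / golayHomB (8 * ε - 6) (3 - ε))
      =O[nhds (0 : ℝ)] (fun _ => (1 : ℝ)) := by
    refine (ContinuousAt.div ?_ hcont.continuousAt hB0).tendsto.isBigO_one ℝ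
    unfold golayRemainder; fun_prop
  exact hfactor.trans_isBigO (by simpa using (isBigO_refl (fun ε : ℝ => ε ^ 4) _).mul hbounded)
end

section
/- For an [[n,1]]_3 stabilizer code with n odd whose weight enumerators satisfy B(-1/2) ≠ 0, one has B(-1/2) = 3(-1)^n A(-1/2) = -3A(-1/2), and hence the distillation map ε'(ε) = 3(3A(z(ε))+B(z(ε)))/(4B(z(ε))) satisfies ε'(0) = 0; i.e., the zeroth-order coefficient C₀ of the expansion 3A(z(ε))+B(z(ε)) = C₀ + C₁ε + ... vanishes automatically for odd-length codes. -/
/-- for an odd-length `[[n,1]]_3` code with `B(-1/2) ≠ 0`, the MacWilliams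
identity gives `B(-1/2) = -3A(-1/2)`, so `3A(-1/2)+B(-1/2) = 0` and the distillation map
`ε'(ε) = 3(3A(z(ε))+B(z(ε)))/(4B(z(ε)))` vanishes at `ε = 0` (where `z(0) = -1/2`). -/
theorem odd_length_zeroth_order_vanishes (n : ℕ) (hn : Odd n) (A B : ℝ → ℝ)
    (hMW : ∀ z : ℝ, 1 + 8 * z ≠ 0 →
      B z = (1 + 8 * z) ^ n / 3 ^ (n - 1) * A ((1 - z) / (1 + 8 * z)))
    (hB : B (-1/2) ≠ 0) :
    B (-1/2) = 3 * (-1 : ℝ) ^ n * A (-1/2) ∧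
    3 * A (-1/2) + B (-1/2) = 0 ∧
    3 * (3 * A ((3 - (0:ℝ)) / (8 * 0 - 6)) + B ((3 - (0:ℝ)) / (8 * 0 - 6)))
      / (4 * B ((3 - (0:ℝ)) / (8 * 0 - 6))) = 0 := by
  obtain ⟨k, hk⟩ := hn
  have h := hMW (-1/2) (by norm_num)
  have harg : ((1 : ℝ) - -1/2) / (1 + 8 * (-1/2)) = -1/2 := by norm_num
  have hcoef : ((1 : ℝ) + 8 * (-1/2)) ^ n / 3 ^ (n - 1) = 3 * (-1 : ℝ) ^ n := by
    have h3 : ((1 : ℝ) + 8 * (-1/2)) = -3 := by norm_num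
    rw [h3, hk]
    have : 2 * k + 1 - 1 = 2 * k := by omega
    rw [this]
    rw [show (-3 : ℝ) = (-1) * 3 by ring, mul_pow]
    rw [pow_succ (3:ℝ) (2*k), pow_mul]
    field_simp
  rw [harg, hcoef] at h
  have hpar : (-1 : ℝ) ^ n = -1 := by
    rw [hk]; simp [pow_succ, pow_mul]
  have hsum : 3 * A (-1/2) + B (-1/2) = 0 := by
    rw [h, hpar]; ring
  have hz : ((3 : ℝ) - 0) / (8 * 0 - 6) = -1/2 := by norm_num
  refine ⟨h, hsum, ?_⟩
  rw [hz, hsum]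
  simp
end
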